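/- arXiv:2207.06715 — 4 statements merged into one kernel-verified Lean document; each statement's English description precedes it below -/
import Mathlib

section
/- Let {X_n, n ≥ 1} be a sequence of random variables and define G(x) = sup_{n≥1} (1/n) Σ_{i=1}^n P(|X_i| > x) for x ∈ ℝ. Let {b_n, n ≥ 1} be a nondecreasing sequence of positive real numbers such that Σ_{i=1}^n b_i/i² = O(b_n/n). If lim_{k→∞} k·G(b_k) = 0, then (1/b_n) max_{j≤n} |Σ_{i=1}^j X_i| → 0 in probability as n → ∞. -/
/-
On the event that no `|X_i|` with `i ≤ n` exceeds `b_n`, every partial sum `S_j`, `j ≤ n`, is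
bounded by `∑_{i ≤ n} min(|X_i|, b_n)`. A union bound and Markov's inequality therefore give
`P(max_{j ≤ n} |S_j| > ε b_n) ≤ n G(b_n) + (ε b_n)⁻¹ ∑_{i ≤ n} E min(|X_i|, b_n)`.
Slicing `[0, b_n]` at `0 = b_0 ≤ b_1 ≤ ⋯ ≤ b_n` bounds the expectations by
`n ∑_{j < n} (b_{j+1} - b_j) G(b_j)`. Since `j G(b_j) → 0`, for every `δ > 0` the tail of this sum
is at most `δ ∑_j (b_{j+1} - b_j) / j`, and by Abel summation
`∑_{j < n} (b_{j+1} - b_j) / j ≤ b_n / n + 2 ∑_{k ≤ n} b_k / k² = O(b_n / n)`. The same condition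
makes `b_n / n` grow at least like the harmonic series, which disposes of the initial terms.
-/

open MeasureTheory Filter Set Topology

theorem min_le_sum_sub_mul_ite {c : ℕ → ℝ} (hc : Monotone c) (hc0 : c 0 = 0) {y : ℝ}
    (hy : 0 ≤ y) (n : ℕ) :
    min y (c n) ≤ ∑ j ∈ Finset.range n, (c (j + 1) - c j) * if c j < y then 1 else 0 := by
  induction n with
  | zero => simp [hc0, hy]
  | succ n ih =>
    rw [Finset.sum_range_succ]
    split_ifs with h
    · linarith [min_le_right y (c (n + 1)), min_eq_right h.le]
    · have hyn : y ≤ c n := not_lt.1 h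
      rw [min_eq_left (hyn.trans (hc n.le_succ))]
      linarith [min_eq_left hyn]

theorem sup'_abs_sum_Icc_le_sum_min {x : ℕ → ℝ} {t : ℝ} {n : ℕ}
    (hx : ∀ i ∈ Finset.Icc 1 n, |x i| ≤ t) :
    (Finset.range (n + 1)).sup' Finset.nonempty_range_add_one
        (fun j => |∑ i ∈ Finset.Icc 1 j, x i|) ≤ ∑ i ∈ Finset.Icc 1 n, min |x i| t := by
  refine Finset.sup'_le _ _ fun j hj => ?_
  calc |∑ i ∈ Finset.Icc 1 j, x i| ≤ ∑ i ∈ Finset.Icc 1 j, |x i| := Finset.abs_sum_le_sum_abs _ _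
    _ ≤ ∑ i ∈ Finset.Icc 1 n, |x i| :=
        Finset.sum_le_sum_of_subset_of_nonneg
          (Finset.Icc_subset_Icc_right (Nat.lt_succ_iff.1 (Finset.mem_range.1 hj)))
          fun i _ _ => abs_nonneg _
    _ = ∑ i ∈ Finset.Icc 1 n, min |x i| t :=
        Finset.sum_congr rfl fun i hi => (min_eq_left (hx i hi)).symm

theorem sum_Icc_le_mul_iSup_avg {p : ℕ → ℝ} (hp : ∀ i, p i ≤ 1) (n : ℕ) :
    ∑ i ∈ Finset.Icc 1 n, p i ≤ n * ⨆ m : ℕ, (1 / (m : ℝ)) * ∑ i ∈ Finset.Icc 1 m, p i := by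
  have hsum (m : ℕ) : ∑ i ∈ Finset.Icc 1 m, p i ≤ m := by
    simpa using Finset.sum_le_sum fun i (_ : i ∈ Finset.Icc 1 m) => hp i
  have hbdd : BddAbove (range fun m : ℕ => (1 / (m : ℝ)) * ∑ i ∈ Finset.Icc 1 m, p i) := by
    refine ⟨1, forall_mem_range.2 fun m => ?_⟩
    rcases m.eq_zero_or_pos with rfl | hm
    · simp
    · rw [one_div, inv_mul_le_iff₀ (by exact_mod_cast hm), mul_one]
      exact hsum m
  rcases n.eq_zero_or_pos with rfl | hn
  · simp
  · have hn0 : (0 : ℝ) < n := by exact_mod_cast hn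
    rw [← div_le_iff₀' hn0, div_eq_inv_mul, ← one_div]
    exact le_ciSup hbdd n

theorem sub_div_le_sub_add_div_sq {a b : ℝ} (hb : 0 ≤ b) {n : ℕ} (hn : 1 ≤ n) :
    (b - a) / n ≤ b / (n + 1) - a / n + 2 * (b / (n + 1) ^ 2) := by
  have hn' : (1 : ℝ) ≤ n := by exact_mod_cast hn
  have hgap : b / (n + 1) - a / n + 2 * (b / (n + 1) ^ 2) - (b - a) / n
      = b * (n - 1) / (n * (n + 1) ^ 2) := by
    field_simp
    ring
  have : 0 ≤ b * (n - 1) / (n * (n + 1) ^ 2) :=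
    div_nonneg (mul_nonneg hb (by linarith)) (by positivity)
  linarith

theorem sum_Ico_sub_div_le {c : ℕ → ℝ} (hc : ∀ k, 1 ≤ k → 0 ≤ c k) {n : ℕ} (hn : 1 ≤ n) :
    ∑ j ∈ Finset.Ico 1 n, (c (j + 1) - c j) / j
      ≤ c n / n + 2 * ∑ k ∈ Finset.Icc 1 n, c k / (k : ℝ) ^ 2 := by
  induction n, hn using Nat.le_induction with
  | base =>
    simp only [Finset.Ico_self, Finset.sum_empty, Finset.Icc_self, Finset.sum_singleton,
      Nat.cast_one, div_one, one_pow]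
    linarith [hc 1 le_rfl]
  | succ n hn ih =>
    rw [Finset.sum_Ico_succ_top hn, Finset.sum_Icc_succ_top (by omega), mul_add]
    have := sub_div_le_sub_add_div_sq (a := c n) (hc (n + 1) (by omega)) hn
    push_cast
    linarith

theorem tendsto_div_natCast_atTop_of_sum_div_sq_le {c : ℕ → ℝ} (hc : ∀ k, 1 ≤ k → 0 ≤ c k)
    (hc1 : 0 < c 1) {C : ℝ}
    (hC : ∀ n, 1 ≤ n → ∑ k ∈ Finset.Icc 1 n, c k / (k : ℝ) ^ 2 ≤ C * (c n / n)) :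
    Tendsto (fun n : ℕ => c n / n) atTop atTop := by
  have hfirst (k : ℕ) (hk : 1 ≤ k) : c 1 ≤ C * (c k / k) := by
    refine le_trans ?_ (hC k hk)
    have := Finset.single_le_sum (f := fun i : ℕ => c i / (i : ℝ) ^ 2)
      (fun i hi => div_nonneg (hc i (Finset.mem_Icc.1 hi).1) (by positivity))
      (Finset.mem_Icc.2 ⟨le_rfl, hk⟩)
    simpa only [Nat.cast_one, one_pow, div_one] using this
  have hC0 : 0 < C := by
    have := hfirst 1 le_rfl
    simp only [Nat.cast_one, div_one] at this
    nlinarith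
  -- `c k / k ≥ c 1 / C`, so `c n / n ≥ C⁻¹ ∑ c k / k² ≥ (c 1 / C²) ∑ 1 / k`
  have hterm (k : ℕ) (hk : 1 ≤ k) : c 1 / C * (1 / (k : ℝ)) ≤ c k / (k : ℝ) ^ 2 := by
    rw [show c k / (k : ℝ) ^ 2 = c k / k * (1 / k) by ring]
    exact mul_le_mul_of_nonneg_right ((div_le_iff₀' hC0).2 (hfirst k hk)) (by positivity)
  have hharmonic (n : ℕ) (hn : 1 ≤ n) :
      c 1 / C ^ 2 * ∑ i ∈ Finset.range n, (1 : ℝ) / (i + 1) ≤ c n / n := by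
    have hIcc : ∑ i ∈ Finset.range n, (1 : ℝ) / (i + 1) = ∑ k ∈ Finset.Icc 1 n, 1 / (k : ℝ) := by
      rw [← Finset.Ico_add_one_right_eq_Icc, Finset.sum_Ico_eq_sum_range]
      simp [add_comm]
    have := (Finset.sum_le_sum fun k hk => hterm k (Finset.mem_Icc.1 hk).1).trans (hC n hn)
    rw [← Finset.mul_sum, ← hIcc] at this
    rw [sq, ← div_div, div_mul_eq_mul_div, div_le_iff₀ hC0, mul_comm]
    linarith
  exact tendsto_atTop_mono' atTop (eventually_atTop.2 ⟨1, hharmonic⟩)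
    (Real.tendsto_sum_range_one_div_nat_succ_atTop.const_mul_atTop (by positivity))

theorem tendsto_natCast_div_mul_sum_sub_mul {c : ℕ → ℝ} (hc : Monotone c) (hc1 : 0 < c 1)
    {C : ℝ} (hC : ∀ n, 1 ≤ n → ∑ k ∈ Finset.Icc 1 n, c k / (k : ℝ) ^ 2 ≤ C * (c n / n))
    {g : ℕ → ℝ} (hg0 : ∀ j, 0 ≤ g j) (hg : Tendsto (fun j : ℕ => (j : ℝ) * g j) atTop (𝓝 0)) :
    Tendsto (fun n : ℕ => n / c n * ∑ j ∈ Finset.range n, (c (j + 1) - c j) * g j)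
      atTop (𝓝 0) := by
  have hcpos (k : ℕ) (hk : 1 ≤ k) : 0 < c k := hc1.trans_le (hc hk)
  have hinc (j : ℕ) : 0 ≤ c (j + 1) - c j := sub_nonneg.2 (hc j.le_succ)
  have hdiv : Tendsto (fun n : ℕ => (n : ℝ) / c n) atTop (𝓝 0) := by
    have := (tendsto_div_natCast_atTop_of_sum_div_sq_le (fun k hk => (hcpos k hk).le) hc1
      hC).inv_tendsto_atTop
    simpa only [Function.comp_def, Pi.inv_def, inv_div] using this
  have hC0 : 0 ≤ C := by
    have := hC 1 le_rfl
    simp only [Finset.Icc_self, Finset.sum_singleton, Nat.cast_one, one_pow, div_one] at this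
    nlinarith
  have habel (n : ℕ) (hn : 1 ≤ n) :
      ∑ j ∈ Finset.Ico 1 n, (c (j + 1) - c j) / j ≤ (1 + 2 * C) * (c n / n) := by
    linarith [sum_Ico_sub_div_le (fun k hk => (hcpos k hk).le) hn, hC n hn]
  rw [tendsto_order]
  refine ⟨fun a ha => ?_, fun a ha => ?_⟩
  · filter_upwards [eventually_ge_atTop 1] with n hn
    exact ha.trans_le (mul_nonneg (div_nonneg n.cast_nonneg (hcpos n hn).le)
      (Finset.sum_nonneg fun j _ => mul_nonneg (hinc j) (hg0 j)))
  -- split at a `K` beyond which `j * g j < δ`; the head is a constant, killed by `n / c n → 0`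
  set δ := a / (2 * (1 + 2 * C)) with hδ
  obtain ⟨K, hK⟩ := eventually_atTop.1
    ((hg.eventually (gt_mem_nhds (by positivity : 0 < δ))).and (eventually_ge_atTop 1))
  set A := ∑ j ∈ Finset.range K, (c (j + 1) - c j) * g j
  have hA : Tendsto (fun n : ℕ => n / c n * A) atTop (𝓝 0) := by
    simpa using hdiv.mul_const A
  filter_upwards [eventually_ge_atTop K, hA.eventually (gt_mem_nhds (half_pos ha))]
    with n hnK hnA
  have hn1 : 1 ≤ n := (hK n hnK).2
  have htail : ∑ j ∈ Finset.Ico K n, (c (j + 1) - c j) * g j ≤ δ * ((1 + 2 * C) * (c n / n)) :=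
    calc ∑ j ∈ Finset.Ico K n, (c (j + 1) - c j) * g j
        ≤ ∑ j ∈ Finset.Ico K n, δ * ((c (j + 1) - c j) / j) := by
          refine Finset.sum_le_sum fun j hj => ?_
          obtain ⟨hjδ, hj1⟩ := hK j (Finset.mem_Ico.1 hj).1
          have hj0 : (0 : ℝ) < j := by exact_mod_cast hj1
          have hgj : g j ≤ δ / j := by rw [le_div_iff₀ hj0]; linarith
          calc (c (j + 1) - c j) * g j ≤ (c (j + 1) - c j) * (δ / j) :=
                mul_le_mul_of_nonneg_left hgj (hinc j)
            _ = δ * ((c (j + 1) - c j) / j) := by ring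
      _ = δ * ∑ j ∈ Finset.Ico K n, (c (j + 1) - c j) / j := (Finset.mul_sum _ _ _).symm
      _ ≤ δ * ∑ j ∈ Finset.Ico 1 n, (c (j + 1) - c j) / j := by
          gcongr
          · exact fun j _ _ => div_nonneg (hinc j) j.cast_nonneg
          · exact (hK K le_rfl).2
      _ ≤ δ * ((1 + 2 * C) * (c n / n)) := by gcongr; exact habel n hn1
  have hcn := hcpos n hn1
  have hn0 : (0 : ℝ) < n := by exact_mod_cast hn1
  rw [← Finset.sum_range_add_sum_Ico _ hnK, mul_add]
  calc n / c n * A + n / c n * ∑ j ∈ Finset.Ico K n, (c (j + 1) - c j) * g j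
      ≤ n / c n * A + n / c n * (δ * ((1 + 2 * C) * (c n / n))) := by gcongr
    _ = n / c n * A + a / 2 := by rw [hδ]; field_simp
    _ < a := by linarith

section Probability

variable {Ω : Type*} [MeasurableSpace Ω] (μ : Measure Ω) [IsFiniteMeasure μ]

theorem measureReal_lt_sup'_abs_sum_le {X : ℕ → Ω → ℝ} (hX : ∀ i, Measurable (X i)) (n : ℕ)
    {t r : ℝ} (ht : 0 ≤ t) (hr : 0 < r) :
    μ.real {ω | r < (Finset.range (n + 1)).sup' Finset.nonempty_range_add_one
        (fun j => |∑ i ∈ Finset.Icc 1 j, X i ω|)}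
      ≤ ∑ i ∈ Finset.Icc 1 n, μ.real {ω | t < |X i ω|}
        + (∑ i ∈ Finset.Icc 1 n, ∫ ω, min |X i ω| t ∂μ) / r := by
  set f : Ω → ℝ := fun ω => ∑ i ∈ Finset.Icc 1 n, min |X i ω| t
  have hsub : {ω | r < (Finset.range (n + 1)).sup' Finset.nonempty_range_add_one
      (fun j => |∑ i ∈ Finset.Icc 1 j, X i ω|)}
      ⊆ (⋃ i ∈ Finset.Icc 1 n, {ω | t < |X i ω|}) ∪ {ω | r ≤ f ω} := by
    intro ω hω
    by_cases h : ∀ i ∈ Finset.Icc 1 n, |X i ω| ≤ t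
    · exact Or.inr (hω.le.trans (sup'_abs_sum_Icc_le_sum_min h))
    · push Not at h
      obtain ⟨i, hi, hti⟩ := h
      exact Or.inl (mem_biUnion hi hti)
  have hint (i : ℕ) : Integrable (fun ω => min |X i ω| t) μ :=
    Integrable.of_bound ((hX i).abs.min measurable_const).aestronglyMeasurable t
      (ae_of_all _ fun ω => by
        rw [Real.norm_eq_abs, abs_of_nonneg (le_min (abs_nonneg _) ht)]
        exact min_le_right _ _)
  have hmarkov := mul_meas_ge_le_integral_of_nonneg (f := f)
    (ae_of_all _ fun ω => Finset.sum_nonneg fun i _ => le_min (abs_nonneg (X i ω)) ht)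
    (integrable_finsetSum _ fun i _ => hint i) r
  rw [integral_finsetSum _ fun i _ => hint i] at hmarkov
  calc _ ≤ μ.real ((⋃ i ∈ Finset.Icc 1 n, {ω | t < |X i ω|}) ∪ {ω | r ≤ f ω}) :=
        measureReal_mono hsub
    _ ≤ _ := measureReal_union_le _ _
    _ ≤ _ := add_le_add (measureReal_biUnion_finset_le _ _) (by rw [le_div_iff₀' hr]; exact hmarkov)

theorem integral_min_le_sum_sub_mul_measureReal {Y : Ω → ℝ} (hY : Measurable Y)
    (hY0 : ∀ ω, 0 ≤ Y ω) {c : ℕ → ℝ} (hc : Monotone c) (hc0 : c 0 = 0) (n : ℕ) :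
    ∫ ω, min (Y ω) (c n) ∂μ ≤ ∑ j ∈ Finset.range n, (c (j + 1) - c j) * μ.real {ω | c j < Y ω} := by
  have hind (j : ℕ) : Integrable (fun ω => (c (j + 1) - c j) * {ω | c j < Y ω}.indicator 1 ω) μ :=
    ((integrable_const 1).indicator (measurableSet_lt measurable_const hY)).const_mul _
  calc ∫ ω, min (Y ω) (c n) ∂μ
      ≤ ∫ ω, ∑ j ∈ Finset.range n, (c (j + 1) - c j) * {ω | c j < Y ω}.indicator 1 ω ∂μ := by
        refine integral_mono_of_nonneg (ae_of_all _ fun ω => le_min (hY0 ω) ?_)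
          (integrable_finsetSum _ fun j _ => hind j) (ae_of_all _ fun ω => ?_)
        · simpa [hc0] using hc n.zero_le
        · simpa [indicator_apply] using min_le_sum_sub_mul_ite hc hc0 (hY0 ω) n
    _ = _ := by
        rw [integral_finsetSum _ fun j _ => hind j]
        simp_rw [integral_const_mul, integral_indicator_one (measurableSet_lt measurable_const hY)]

theorem sum_integral_min_abs_le {X : ℕ → Ω → ℝ} (hX : ∀ i, Measurable (X i)) {c : ℕ → ℝ}
    (hc : Monotone c) (hc0 : c 0 = 0) {G : ℝ → ℝ} {n : ℕ}
    (hG : ∀ x, ∑ i ∈ Finset.Icc 1 n, μ.real {ω | x < |X i ω|} ≤ n * G x) :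
    ∑ i ∈ Finset.Icc 1 n, ∫ ω, min |X i ω| (c n) ∂μ
      ≤ n * ∑ j ∈ Finset.range n, (c (j + 1) - c j) * G (c j) :=
  calc ∑ i ∈ Finset.Icc 1 n, ∫ ω, min |X i ω| (c n) ∂μ
      ≤ ∑ i ∈ Finset.Icc 1 n, ∑ j ∈ Finset.range n,
          (c (j + 1) - c j) * μ.real {ω | c j < |X i ω|} :=
        Finset.sum_le_sum fun i _ =>
          integral_min_le_sum_sub_mul_measureReal μ (hX i).abs (fun ω => abs_nonneg _) hc hc0 n
    _ = ∑ j ∈ Finset.range n, (c (j + 1) - c j) *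
          ∑ i ∈ Finset.Icc 1 n, μ.real {ω | c j < |X i ω|} := by
        rw [Finset.sum_comm]
        simp_rw [Finset.mul_sum]
    _ ≤ ∑ j ∈ Finset.range n, (c (j + 1) - c j) * (n * G (c j)) :=
        Finset.sum_le_sum fun j _ => mul_le_mul_of_nonneg_left (hG _) (sub_nonneg.2 (hc j.le_succ))
    _ = n * ∑ j ∈ Finset.range n, (c (j + 1) - c j) * G (c j) := by
        rw [Finset.mul_sum]
        exact Finset.sum_congr rfl fun j _ => by ring

theorem measureReal_mul_lt_sup'_abs_sum_le {X : ℕ → Ω → ℝ} (hX : ∀ i, Measurable (X i))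
    {c : ℕ → ℝ} (hc : Monotone c) (hc0 : c 0 = 0) {G : ℝ → ℝ} {n : ℕ}
    (hG : ∀ x, ∑ i ∈ Finset.Icc 1 n, μ.real {ω | x < |X i ω|} ≤ n * G x) {ε : ℝ} (hε : 0 < ε)
    (hcn : 0 < c n) :
    μ.real {ω | ε * c n < (Finset.range (n + 1)).sup' Finset.nonempty_range_add_one
        (fun j => |∑ i ∈ Finset.Icc 1 j, X i ω|)}
      ≤ n * G (c n) + ε⁻¹ * (n / c n * ∑ j ∈ Finset.range n, (c (j + 1) - c j) * G (c j)) :=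
  calc _ ≤ ∑ i ∈ Finset.Icc 1 n, μ.real {ω | c n < |X i ω|}
        + (∑ i ∈ Finset.Icc 1 n, ∫ ω, min |X i ω| (c n) ∂μ) / (ε * c n) :=
        measureReal_lt_sup'_abs_sum_le μ hX n hcn.le (mul_pos hε hcn)
    _ ≤ n * G (c n) + n * (∑ j ∈ Finset.range n, (c (j + 1) - c j) * G (c j)) / (ε * c n) := by
        gcongr
        exacts [hG _, sum_integral_min_abs_le μ hX hc hc0 hG]
    _ = _ := by field_simp

end Probability

theorem monotone_update_zero_zero {b : ℕ → ℝ} (hb1 : 0 ≤ b 1)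
    (hb : ∀ m n, 1 ≤ m → m ≤ n → b m ≤ b n) : Monotone (Function.update b 0 0) :=
  monotone_nat_of_le_succ fun
    | 0 => by simpa using hb1
    | n + 1 => by simpa using hb (n + 1) (n + 2) (by omega) (by omega)

/-- Let `{X_n}` be random variables with
`G(x) = sup_n (1/n) Σ_{i=1}^n P(|X_i| > x)` and let `{b_n}` be a nondecreasing sequence of
positive reals with `Σ_{i=1}^n b_i/i² = O(b_n/n)`. If `k·G(b_k) → 0`, then
`(1/b_n) max_{j≤n} |Σ_{i=1}^j X_i| → 0` in probability. -/
theorem statement1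
    {Ω : Type*} [MeasurableSpace Ω] (μ : Measure Ω) [IsProbabilityMeasure μ]
    (X : ℕ → Ω → ℝ) (hXmeas : ∀ i, Measurable (X i))
    (G : ℝ → ℝ)
    (hG : ∀ x : ℝ, G x = ⨆ n : ℕ, (1 / (n : ℝ)) * ∑ i ∈ Finset.Icc 1 n,
      (μ {ω | |X i ω| > x}).toReal)
    (b : ℕ → ℝ) (hbpos : ∀ n, 1 ≤ n → 0 < b n)
    (hbmono : ∀ m n, 1 ≤ m → m ≤ n → b m ≤ b n)
    (hbO : ∃ C : ℝ, ∀ n, 1 ≤ n →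
      ∑ i ∈ Finset.Icc 1 n, b i / (i : ℝ) ^ 2 ≤ C * (b n / (n : ℝ)))
    (hGb : Tendsto (fun k : ℕ => (k : ℝ) * G (b k)) atTop (nhds 0)) :
    ∀ ε : ℝ, 0 < ε → Tendsto (fun n : ℕ =>
      (μ {ω | (1 / b n) * (Finset.range (n + 1)).sup' Finset.nonempty_range_add_one
          (fun j => |∑ i ∈ Finset.Icc 1 j, X i ω|) > ε}).toReal) atTop (nhds 0) := by
  intro ε hε
  obtain ⟨C, hC⟩ := hbO
  -- `0 = c 0 ≤ c 1 ≤ ⋯ ≤ c n` are the slicing points of `[0, b n]` in the layer-cake bound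
  set c := Function.update b 0 0
  have hcb (n : ℕ) (hn : 1 ≤ n) : c n = b n := Function.update_of_ne (by omega) _ _
  have hc : Monotone c := monotone_update_zero_zero (hbpos 1 le_rfl).le hbmono
  have hcC (n : ℕ) (hn : 1 ≤ n) : ∑ k ∈ Finset.Icc 1 n, c k / (k : ℝ) ^ 2 ≤ C * (c n / n) := by
    rw [Finset.sum_congr rfl fun k hk => by rw [hcb k (Finset.mem_Icc.1 hk).1], hcb n hn]
    exact hC n hn
  have hGsum (x : ℝ) (n : ℕ) : ∑ i ∈ Finset.Icc 1 n, μ.real {ω | x < |X i ω|} ≤ n * G x :=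
    hG x ▸ sum_Icc_le_mul_iSup_avg (fun _ => measureReal_le_one) n
  have hG0 (x : ℝ) : 0 ≤ G x := hG x ▸ Real.iSup_nonneg fun m => by positivity
  have hGc : Tendsto (fun j : ℕ => (j : ℝ) * G (c j)) atTop (𝓝 0) :=
    hGb.congr' (eventually_atTop.2 ⟨1, fun k hk => by simp only [hcb k hk]⟩)
  have hT := tendsto_natCast_div_mul_sum_sub_mul hc ((hcb 1 le_rfl).symm ▸ hbpos 1 le_rfl) hcC
    (fun j => hG0 (c j)) hGc
  refine squeeze_zero' (Eventually.of_forall fun n => ENNReal.toReal_nonneg)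
    (eventually_atTop.2 ⟨1, fun n hn => ?_⟩) (by simpa using hGb.add (hT.const_mul ε⁻¹))
  have hcn : 0 < c n := hcb n hn ▸ hbpos n hn
  refine (measureReal_mono fun ω (hω : ε < 1 / b n * _) => ?_).trans
    ((measureReal_mul_lt_sup'_abs_sum_le μ hXmeas hc (Function.update_self _ _ _) (hGsum · n)
      hε hcn).trans_eq (by rw [hcb n hn]))
  rwa [one_div, ← div_eq_inv_mul, lt_div_iff₀ (hbpos n hn), ← hcb n hn] at hω
end

section
/- Let {k_n, n ≥ 1} be a sequence of positive integers, {X_{n,i}, 1 ≤ i ≤ k_n, n ≥ 1} an array of random variables, and {a_{n,i}, 1 ≤ i ≤ k_n, n ≥ 1} an array of nonnegative real numbers satisfying sup_{n≥1} Σ_{i=1}^{k_n} a_{n,i} = C_0 ∈ (0,∞). Define F(x) = 1 − (1/C_0) sup_{n≥1} Σ_{i=1}^{k_n} a_{n,i} P(|X_{n,i}| > x) for x ∈ ℝ. Then F is the distribution function of a random variable X if and only if lim_{x→∞} F(x) = 1; and in that case {X_{n,i}} is {a_{n,i}}-stochastically dominated by X. -/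
open MeasureTheory Filter Set Topology ProbabilityTheory

/-!
Write `G = C₀ (1 - F)` for the weighted supremum of tail probabilities. Each tail
`y ↦ P(|X_{n,i}| > y)` is antitone and, by continuity of measures from below, lower
semicontinuous; both properties survive nonnegative weighted sums and bounded suprema, so `G` is
antitone and lower semicontinuous, i.e. right-continuous. Moreover `G = C₀` on `(-∞, 0)`. Hence
`F` is nondecreasing, right-continuous and tends to `0` at `-∞`: it is a distribution function
exactly when it tends to `1` at `+∞`. Finally `C₀ (1 - F(x)) = C₀ P(X > x) ≤ C₀ P(|X| > x)`.
-/

theorem lowerSemicontinuous_measureReal_setOf_lt {α : Type*} [MeasurableSpace α]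
    (μ : Measure α) [IsFiniteMeasure μ] (f : α → ℝ) :
    LowerSemicontinuous fun y => μ.real {a | y < f a} := by
  intro x c hc
  obtain ⟨u, hu_anti, hxu, hu_lim⟩ := exists_seq_strictAnti_tendsto x
  have hmono : Monotone fun n => {a | u n < f a} :=
    fun m n hmn a ha => (hu_anti.antitone hmn).trans_lt ha
  have hunion : ⋃ n, {a | u n < f a} = {a | x < f a} := by
    ext a
    simp only [mem_iUnion, mem_ofPred_eq]
    exact ⟨fun ⟨n, hn⟩ => (hxu n).trans hn,
      fun ha => (hu_lim.eventually (eventually_lt_nhds ha)).exists⟩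
  have hlim : Tendsto (fun n => μ.real {a | u n < f a}) atTop (𝓝 (μ.real {a | x < f a})) := by
    rw [← hunion]
    exact (ENNReal.tendsto_toReal (measure_ne_top μ _)).comp (tendsto_measure_iUnion_atTop hmono)
  obtain ⟨n, hn⟩ := (hlim.eventually (eventually_gt_nhds hc)).exists
  filter_upwards [eventually_lt_nhds (hxu n)] with y hy
  exact hn.trans_le (measureReal_mono fun a ha => hy.trans ha)

theorem Antitone.continuousWithinAt_Ici_of_lowerSemicontinuousAt {α γ : Type*}
    [TopologicalSpace α] [Preorder α] [LinearOrder γ] [TopologicalSpace γ] [OrderTopology γ]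
    {g : α → γ} {x : α} (hg : Antitone g) (hlsc : LowerSemicontinuousAt g x) :
    ContinuousWithinAt g (Ici x) x :=
  continuousWithinAt_iff_lower_upperSemicontinuousWithinAt.2
    ⟨hlsc.lowerSemicontinuousWithinAt _,
      fun _ hc => eventually_nhdsWithin_of_forall fun _ hy => (hg hy).trans_lt hc⟩

theorem one_sub_cdf_le_measureReal_abs_gt (ν : Measure ℝ) [IsProbabilityMeasure ν] (x : ℝ) :
    1 - cdf ν x ≤ ν.real {y | x < |y|} := by
  rw [cdf_eq_real, ← probReal_compl_eq_one_sub measurableSet_Iic, compl_Iic]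
  exact measureReal_mono fun y hy => lt_of_lt_of_le hy (le_abs_self y)

section WeightedTail

variable {Ω : Type*} [MeasurableSpace Ω]

noncomputable def weightedTail (μ : Measure Ω) (k : ℕ → ℕ) (X : ℕ → ℕ → Ω → ℝ) (a : ℕ → ℕ → ℝ)
    (x : ℝ) : ℝ :=
  ⨆ n, ∑ i ∈ Finset.Icc 1 (k n), a n i * μ.real {ω | x < |X n i ω|}

variable {μ : Measure Ω} [IsProbabilityMeasure μ] {k : ℕ → ℕ} {X : ℕ → ℕ → Ω → ℝ}
  {a : ℕ → ℕ → ℝ}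

theorem bddAbove_range_sum_mul_measureReal (ha : ∀ n i, 0 ≤ a n i)
    (hbdd : BddAbove (range fun n => ∑ i ∈ Finset.Icc 1 (k n), a n i)) (x : ℝ) :
    BddAbove (range fun n => ∑ i ∈ Finset.Icc 1 (k n), a n i * μ.real {ω | x < |X n i ω|}) := by
  obtain ⟨C, hC⟩ := hbdd
  refine ⟨C, forall_mem_range.2 fun n => le_trans ?_ (hC (mem_range_self n))⟩
  exact Finset.sum_le_sum fun i _ => mul_le_of_le_one_right (ha n i) measureReal_le_one

theorem antitone_weightedTail (ha : ∀ n i, 0 ≤ a n i)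
    (hbdd : BddAbove (range fun n => ∑ i ∈ Finset.Icc 1 (k n), a n i)) :
    Antitone (weightedTail μ k X a) := fun x y hxy =>
  ciSup_mono (bddAbove_range_sum_mul_measureReal ha hbdd x) fun n =>
    Finset.sum_le_sum fun i _ => mul_le_mul_of_nonneg_left
      (measureReal_mono fun _ hω => hxy.trans_lt hω) (ha n i)

theorem lowerSemicontinuous_weightedTail (ha : ∀ n i, 0 ≤ a n i)
    (hbdd : BddAbove (range fun n => ∑ i ∈ Finset.Icc 1 (k n), a n i)) :
    LowerSemicontinuous (weightedTail μ k X a) :=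
  lowerSemicontinuous_ciSup (bddAbove_range_sum_mul_measureReal ha hbdd) fun n =>
    lowerSemicontinuous_sum fun i _ =>
      (continuous_const_mul (a n i)).comp_lowerSemicontinuous
        (lowerSemicontinuous_measureReal_setOf_lt μ _) (monotone_mul_left_of_nonneg (ha n i))

theorem weightedTail_of_neg {C0 : ℝ}
    (hsup : IsLUB (range fun n => ∑ i ∈ Finset.Icc 1 (k n), a n i) C0) {x : ℝ} (hx : x < 0) :
    weightedTail μ k X a x = C0 := by
  have hall : ∀ n i, {ω | x < |X n i ω|} = univ :=
    fun n i => eq_univ_of_forall fun ω => hx.trans_le (abs_nonneg _)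
  simp only [weightedTail, hall, probReal_univ, mul_one]
  exact hsup.ciSup_eq

end WeightedTail

theorem statement2_general
    {Ω : Type*} [MeasurableSpace Ω] (μ : Measure Ω) [IsProbabilityMeasure μ]
    (k : ℕ → ℕ)
    (X : ℕ → ℕ → Ω → ℝ)
    (a : ℕ → ℕ → ℝ) (ha : ∀ n i, 0 ≤ a n i)
    (C0 : ℝ) (hC0 : 0 < C0)
    (hsup : IsLUB (Set.range fun n => ∑ i ∈ Finset.Icc 1 (k n), a n i) C0)
    (F : ℝ → ℝ)
    (hF : ∀ x : ℝ, F x = 1 - (1 / C0) * ⨆ n : ℕ, ∑ i ∈ Finset.Icc 1 (k n),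
      a n i * (μ {ω | |X n i ω| > x}).toReal) :
    ((∃ ν : Measure ℝ, IsProbabilityMeasure ν ∧ ∀ x : ℝ, F x = (ν (Set.Iic x)).toReal)
        ↔ Tendsto F atTop (nhds 1))
      ∧ ∀ ν : Measure ℝ, IsProbabilityMeasure ν → (∀ x : ℝ, F x = (ν (Set.Iic x)).toReal) →
          ∀ x : ℝ, (⨆ n : ℕ, ∑ i ∈ Finset.Icc 1 (k n),
              a n i * (μ {ω | |X n i ω| > x}).toReal)
            ≤ C0 * (ν {y : ℝ | |y| > x}).toReal := by
  have hFG : F = fun x => 1 - weightedTail μ k X a x / C0 :=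
    funext fun x => (hF x).trans (by rw [one_div_mul_eq_div]; rfl)
  have hG_anti : Antitone (weightedTail μ k X a) := antitone_weightedTail ha hsup.bddAbove
  have hF_mono : Monotone F := hFG ▸ fun x y hxy => by
    dsimp only
    gcongr
    exact hG_anti hxy
  have hF_rc (x : ℝ) : ContinuousWithinAt F (Ici x) x :=
    hFG ▸ ((hG_anti.continuousWithinAt_Ici_of_lowerSemicontinuousAt
      (lowerSemicontinuous_weightedTail ha hsup.bddAbove x)).div_const C0).const_sub 1
  have hF_bot : Tendsto F atBot (𝓝 0) := by
    refine tendsto_const_nhds.congr' ?_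
    filter_upwards [eventually_lt_atBot 0] with x hx
    simp only [hFG, weightedTail_of_neg hsup hx, div_self hC0.ne', sub_self]
  have hF_cdf (ν : Measure ℝ) [IsProbabilityMeasure ν] (hν : ∀ x, F x = (ν (Iic x)).toReal) :
      F = cdf ν := funext fun x => (hν x).trans (cdf_eq_real ν x).symm
  refine ⟨⟨fun ⟨ν, _, hν⟩ => hF_cdf ν hν ▸ tendsto_cdf_atTop ν, fun htop => ?_⟩,
    fun ν _ hν x => ?_⟩
  · let Fs : StieltjesFunction ℝ := ⟨F, hF_mono, hF_rc⟩
    have hprob := Fs.isProbabilityMeasure hF_bot htop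
    refine ⟨Fs.measure, hprob, fun x => ?_⟩
    rw [← measureReal_def, ← cdf_eq_real, cdf_measure_stieltjesFunction Fs hF_bot htop]
  · calc weightedTail μ k X a x = C0 * (1 - F x) := by rw [hFG]; field_simp; ring
      _ ≤ C0 * ν.real {y | x < |y|} := by
        gcongr
        rw [hF_cdf ν hν]
        exact one_sub_cdf_le_measureReal_abs_gt ν x

/-- With `F(x) = 1 − (1/C₀) sup_n Σ_{i=1}^{k_n} a_{n,i} P(|X_{n,i}| > x)`,
`F` is the distribution function of a random variable `X` iff `lim_{x→∞} F(x) = 1`; and in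
that case `{X_{n,i}}` is `{a_{n,i}}`-stochastically dominated by `X`. -/
theorem statement2
    {Ω : Type*} [MeasurableSpace Ω] (μ : Measure Ω) [IsProbabilityMeasure μ]
    (k : ℕ → ℕ) (hk : ∀ n, 0 < k n)
    (X : ℕ → ℕ → Ω → ℝ) (hXmeas : ∀ n i, Measurable (X n i))
    (a : ℕ → ℕ → ℝ) (ha : ∀ n i, 0 ≤ a n i)
    (C0 : ℝ) (hC0 : 0 < C0)
    (hsup : IsLUB (Set.range fun n => ∑ i ∈ Finset.Icc 1 (k n), a n i) C0)
    (F : ℝ → ℝ)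
    (hF : ∀ x : ℝ, F x = 1 - (1 / C0) * ⨆ n : ℕ, ∑ i ∈ Finset.Icc 1 (k n),
      a n i * (μ {ω | |X n i ω| > x}).toReal) :
    ((∃ ν : Measure ℝ, IsProbabilityMeasure ν ∧ ∀ x : ℝ, F x = (ν (Set.Iic x)).toReal)
        ↔ Tendsto F atTop (nhds 1))
      ∧ ∀ ν : Measure ℝ, IsProbabilityMeasure ν → (∀ x : ℝ, F x = (ν (Set.Iic x)).toReal) →
          ∀ x : ℝ, (⨆ n : ℕ, ∑ i ∈ Finset.Icc 1 (k n),
              a n i * (μ {ω | |X n i ω| > x}).toReal)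
            ≤ C0 * (ν {y : ℝ | |y| > x}).toReal :=
  statement2_general μ k X a ha C0 hC0 hsup F hF
end

section
/- Let {k_n, n ≥ 1} be a sequence of positive integers, {X_{n,i}, 1 ≤ i ≤ k_n, n ≥ 1} an array of random variables, and {a_{n,i}, 1 ≤ i ≤ k_n, n ≥ 1} an array of nonnegative real numbers with sup_{n≥1} Σ_{i=1}^{k_n} a_{n,i} = C_0 ∈ (0,∞). Then there exists a random variable X such that sup_{n≥1} Σ_{i=1}^{k_n} a_{n,i} P(|X_{n,i}| > x) ≤ C_0 P(|X| > x) for all x ∈ ℝ if and only if there exist a random variable Y and a finite constant C > 0 such that sup_{n≥1} Σ_{i=1}^{k_n} a_{n,i} P(|X_{n,i}| > x) ≤ C P(|Y| > x) for all x ∈ ℝ. -/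
open MeasureTheory ProbabilityTheory Filter Set Topology

/-!
Only one direction needs an argument. The left side `S x` of the inequalities is at most `C₀`
(probabilities are at most one) and at most `C P(|Y| > x)`, so `S x ≤ C₀ min(1, c P(|Y| > x))`
with `c = max 1 (C / C₀)`. Since `c ≥ 1`, the function `x ↦ min(1, c P(|Y| > x))` is again a
tail function: `1 - min(1, c (1 - F x))`, with `F` the distribution function of `|Y|`, is
monotone, right-continuous and runs from `0` to `1`, hence is the distribution function of some
`X`.
-/

namespace StieltjesFunction

def comp {R : Type*} [LinearOrder R] [TopologicalSpace R] (f : StieltjesFunction R)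
    (g : ℝ → ℝ) (hg_mono : Monotone g) (hg_cont : Continuous g) : StieltjesFunction R where
  toFun := g ∘ f
  mono' := hg_mono.comp f.mono
  right_continuous' x := hg_cont.continuousAt.comp_continuousWithinAt (f.right_continuous x)

end StieltjesFunction

theorem exists_isProbabilityMeasure_measureReal_Ioi_eq_min (ν : Measure ℝ)
    [IsProbabilityMeasure ν] {c : ℝ} (hc : 1 ≤ c) :
    ∃ ν' : Measure ℝ, IsProbabilityMeasure ν' ∧
      ∀ x, ν'.real (Ioi x) = min 1 (c * ν.real (Ioi x)) := by
  set g : ℝ → ℝ := fun t => max 0 (1 - c * (1 - t))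
  have hg_mono : Monotone g := fun s t hst => by
    simp only [g]; gcongr
  have hg_cont : Continuous g := by fun_prop
  let F := (cdf ν).comp g hg_mono hg_cont
  have hF_bot : Tendsto F atBot (𝓝 0) := by
    have hg0 : g 0 = 0 := by simp only [g]; grind
    have := (hg_cont.tendsto 0).comp (tendsto_cdf_atBot ν)
    rwa [hg0] at this
  have hF_top : Tendsto F atTop (𝓝 1) := by
    have hg1 : g 1 = 1 := by simp [g]
    have := (hg_cont.tendsto 1).comp (tendsto_cdf_atTop ν)
    rwa [hg1] at this
  have := F.isProbabilityMeasure hF_bot hF_top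
  refine ⟨F.measure, inferInstance, fun x => ?_⟩
  have hIoi : ν.real (Ioi x) = 1 - cdf ν x := by
    rw [cdf_eq_real, ← compl_Iic, probReal_compl_eq_one_sub measurableSet_Iic]
  rw [measureReal_def, F.measure_Ioi hF_top, hIoi]
  have hu : 0 ≤ c * (1 - cdf ν x) := mul_nonneg (by linarith) (sub_nonneg.2 (cdf_le_one ν x))
  have h_one_sub : 1 - g (cdf ν x) = min 1 (c * (1 - cdf ν x)) := by
    simp only [g]; grind
  exact (congrArg ENNReal.toReal (congrArg ENNReal.ofReal h_one_sub)).trans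
    (ENNReal.toReal_ofReal (le_min zero_le_one hu))

theorem iSup_sum_mul_measureReal_le {Ω ι κ : Type*} [MeasurableSpace Ω] (μ : Measure Ω)
    [IsProbabilityMeasure μ] [Nonempty ι] (t : ι → Finset κ) (a : ι → κ → ℝ)
    (ha : ∀ n i, 0 ≤ a n i) (s : ι → κ → Set Ω) {C₀ : ℝ} (hC₀ : ∀ n, ∑ i ∈ t n, a n i ≤ C₀) :
    ⨆ n, ∑ i ∈ t n, a n i * μ.real (s n i) ≤ C₀ :=
  ciSup_le fun n => (Finset.sum_le_sum fun i _ =>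
    mul_le_of_le_one_right (ha n i) measureReal_le_one).trans (hC₀ n)

theorem statement3_general
    {Ω : Type*} [MeasurableSpace Ω] (μ : Measure Ω) [IsProbabilityMeasure μ]
    (k : ℕ → ℕ)
    (X : ℕ → ℕ → Ω → ℝ)
    (a : ℕ → ℕ → ℝ) (ha : ∀ n i, 0 ≤ a n i)
    (C0 : ℝ) (hC0 : 0 < C0)
    (hsup : IsLUB (Set.range fun n => ∑ i ∈ Finset.Icc 1 (k n), a n i) C0) :
    (∃ ν : Measure ℝ, IsProbabilityMeasure ν ∧ ∀ x : ℝ,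
        (⨆ n : ℕ, ∑ i ∈ Finset.Icc 1 (k n), a n i * (μ {ω | |X n i ω| > x}).toReal)
          ≤ C0 * (ν {y : ℝ | |y| > x}).toReal)
      ↔ (∃ (ν : Measure ℝ) (C : ℝ), IsProbabilityMeasure ν ∧ 0 < C ∧ ∀ x : ℝ,
          (⨆ n : ℕ, ∑ i ∈ Finset.Icc 1 (k n), a n i * (μ {ω | |X n i ω| > x}).toReal)
            ≤ C * (ν {y : ℝ | |y| > x}).toReal) := by
  refine ⟨fun ⟨ν, hν, h⟩ => ⟨ν, C0, hν, hC0, h⟩, ?_⟩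
  rintro ⟨ν, C, hν, -, h⟩
  set c := max 1 (C / C0)
  have : IsProbabilityMeasure (ν.map abs) := Measure.isProbabilityMeasure_map (by fun_prop)
  obtain ⟨ν', hν', htail⟩ :=
    exists_isProbabilityMeasure_measureReal_Ioi_eq_min (ν.map abs) (le_max_left 1 (C / C0))
  refine ⟨ν', hν', fun x => ?_⟩
  have hC0_bound := iSup_sum_mul_measureReal_le μ (fun n => Finset.Icc 1 (k n)) a ha
    (fun n i => {ω | |X n i ω| > x}) fun n => hsup.1 ⟨n, rfl⟩
  have hmap : (ν.map abs).real (Ioi x) = ν.real {y | |y| > x} :=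
    map_measureReal_apply measurable_abs measurableSet_Ioi
  have hC : C ≤ C0 * c := by
    rw [← div_le_iff₀' hC0]; exact le_max_right _ _
  calc _ ≤ min C0 (C * ν.real {y | |y| > x}) := le_min hC0_bound (h x)
    _ ≤ C0 * min 1 (c * (ν.map abs).real (Ioi x)) := by
      rw [mul_min_of_nonneg _ _ hC0.le, hmap, mul_one, ← mul_assoc]
      gcongr
    _ = C0 * ν'.real (Ioi x) := by rw [htail]
    _ ≤ C0 * ν'.real {y | |y| > x} :=
      mul_le_mul_of_nonneg_left
        (measureReal_mono fun y (hy : x < y) => hy.trans_le (le_abs_self y)) hC0.le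

/-- There exists a random variable `X` with
`sup_n Σ_{i=1}^{k_n} a_{n,i} P(|X_{n,i}| > x) ≤ C₀ P(|X| > x)` for all `x` iff there exist a
random variable `Y` and a constant `C > 0` with
`sup_n Σ_{i=1}^{k_n} a_{n,i} P(|X_{n,i}| > x) ≤ C P(|Y| > x)` for all `x`.
(Random variables are represented by their laws, i.e. probability measures on `ℝ`.) -/
theorem statement3
    {Ω : Type*} [MeasurableSpace Ω] (μ : Measure Ω) [IsProbabilityMeasure μ]
    (k : ℕ → ℕ) (hk : ∀ n, 0 < k n)
    (X : ℕ → ℕ → Ω → ℝ) (hXmeas : ∀ n i, Measurable (X n i))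
    (a : ℕ → ℕ → ℝ) (ha : ∀ n i, 0 ≤ a n i)
    (C0 : ℝ) (hC0 : 0 < C0)
    (hsup : IsLUB (Set.range fun n => ∑ i ∈ Finset.Icc 1 (k n), a n i) C0) :
    (∃ ν : Measure ℝ, IsProbabilityMeasure ν ∧ ∀ x : ℝ,
        (⨆ n : ℕ, ∑ i ∈ Finset.Icc 1 (k n), a n i * (μ {ω | |X n i ω| > x}).toReal)
          ≤ C0 * (ν {y : ℝ | |y| > x}).toReal)
      ↔ (∃ (ν : Measure ℝ) (C : ℝ), IsProbabilityMeasure ν ∧ 0 < C ∧ ∀ x : ℝ,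
          (⨆ n : ℕ, ∑ i ∈ Finset.Icc 1 (k n), a n i * (μ {ω | |X n i ω| > x}).toReal)
            ≤ C * (ν {y : ℝ | |y| > x}).toReal) :=
  statement3_general μ k X a ha C0 hC0 hsup
end

section
/- Let {k_n, n ≥ 1} be a sequence of positive integers and {X_{n,i}, 1 ≤ i ≤ k_n, n ≥ 1} an array of random variables. Define F(x) = 1 − sup_{n≥1} (1/k_n) Σ_{i=1}^{k_n} P(|X_{n,i}| > x) for x ∈ ℝ. Then F is the distribution function of a random variable X if and only if lim_{x→∞} F(x) = 1; and in that case {X_{n,i}} is stochastically dominated in the Cesàro sense by X. -/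
/-!
The Cesàro tails `x ↦ (1/k_n) Σ P(|X_{n,i}| > x)` are antitone, right-continuous, bounded by `1`,
and equal to `1` for `x < 0`. A supremum of antitone right-continuous functions is antitone and
lower semicontinuous, hence right-continuous, so `F = 1 - sup_n (…)` is a Stieltjes
function vanishing on `(-∞, 0)`. Its Stieltjes measure is a probability measure exactly when
`F → 1` at `+∞`. Any such `X` dominates with `C = 1`, since `1 - F(x) = P(X > x) ≤ P(|X| > x)`.
-/

open MeasureTheory Filter Set Topology

lemma Antitone.continuousWithinAt_Ici_of_lowerSemicontinuousWithinAt {α γ : Type*}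
    [TopologicalSpace α] [Preorder α] [LinearOrder γ] [TopologicalSpace γ] [OrderTopology γ]
    {f : α → γ} (hf : Antitone f) {x : α} (h : LowerSemicontinuousWithinAt f (Ici x) x) :
    ContinuousWithinAt f (Ici x) x :=
  continuousWithinAt_iff_lower_upperSemicontinuousWithinAt.2
    ⟨h, fun _ hc => eventually_nhdsWithin_of_forall fun _ hy => (hf hy).trans_lt hc⟩

lemma antitone_ciSup_of_antitone {ι α : Type*} [Preorder α] {f : ι → α → ℝ}
    (hf : ∀ i, Antitone (f i)) (hbdd : ∀ x, BddAbove (range fun i => f i x)) :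
    Antitone fun x => ⨆ i, f i x :=
  fun _ _ hxy => ciSup_mono (hbdd _) fun i => hf i hxy

lemma continuousWithinAt_Ici_ciSup_of_antitone {ι α : Type*} [TopologicalSpace α] [Preorder α]
    {f : ι → α → ℝ} (hf : ∀ i, Antitone (f i)) {x : α}
    (hcont : ∀ i, ContinuousWithinAt (f i) (Ici x) x)
    (hbdd : ∀ y, BddAbove (range fun i => f i y)) :
    ContinuousWithinAt (fun y => ⨆ i, f i y) (Ici x) x :=
  (antitone_ciSup_of_antitone hf hbdd).continuousWithinAt_Ici_of_lowerSemicontinuousWithinAt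
    (lowerSemicontinuousWithinAt_ciSup (Eventually.of_forall hbdd)
      fun i => (hcont i).lowerSemicontinuousWithinAt)

section Tail

variable {Ω : Type*} [MeasurableSpace Ω] (μ : Measure Ω) [IsFiniteMeasure μ] (f : Ω → ℝ)

lemma antitone_measureReal_lt : Antitone fun t => μ.real {ω | t < f ω} :=
  fun _ _ hst => measureReal_mono fun _ hω => hst.trans_lt hω

lemma lowerSemicontinuousWithinAt_measureReal_lt (x : ℝ) :
    LowerSemicontinuousWithinAt (fun t => μ.real {ω | t < f ω}) (Ici x) x := by
  intro c hc
  have hmono : Monotone fun m : ℕ => {ω | x + 1 / (m + 1) < f ω} :=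
    fun _ _ hmn _ hω => (add_le_add_right (Nat.one_div_le_one_div hmn) x).trans_lt hω
  have hunion : ⋃ m : ℕ, {ω | x + 1 / (m + 1) < f ω} = {ω | x < f ω} := by
    ext ω
    simp only [mem_iUnion, mem_ofPred_eq]
    constructor
    · rintro ⟨m, hm⟩
      exact (lt_add_of_pos_right x Nat.one_div_pos_of_nat).trans hm
    · intro hω
      obtain ⟨m, hm⟩ := exists_nat_one_div_lt (sub_pos.2 hω)
      exact ⟨m, by linarith⟩
  have hlim : Tendsto (fun m : ℕ => μ.real {ω | x + 1 / (m + 1) < f ω}) atTop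
      (𝓝 (μ.real {ω | x < f ω})) := by
    rw [← hunion]
    exact (ENNReal.tendsto_toReal (measure_ne_top μ _)).comp (tendsto_measure_iUnion_atTop hmono)
  obtain ⟨m, hm⟩ := (hlim.eventually (lt_mem_nhds hc)).exists
  filter_upwards [Ico_mem_nhdsGE (lt_add_of_pos_right x (Nat.one_div_pos_of_nat (n := m)))]
    with t ht
  exact hm.trans_le (antitone_measureReal_lt μ f ht.2.le)

lemma continuousWithinAt_Ici_measureReal_lt (x : ℝ) :
    ContinuousWithinAt (fun t => μ.real {ω | t < f ω}) (Ici x) x :=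
  (antitone_measureReal_lt μ f).continuousWithinAt_Ici_of_lowerSemicontinuousWithinAt
    (lowerSemicontinuousWithinAt_measureReal_lt μ f x)

end Tail

section Cesaro

variable {Ω : Type*} [MeasurableSpace Ω] (μ : Measure Ω)

noncomputable def cesaroTail (k : ℕ) (X : ℕ → Ω → ℝ) (x : ℝ) : ℝ :=
  (1 / (k : ℝ)) * ∑ i ∈ Finset.Icc 1 k, μ.real {ω | |X i ω| > x}

lemma cesaroTail_nonneg (k : ℕ) (X : ℕ → Ω → ℝ) (x : ℝ) : 0 ≤ cesaroTail μ k X x :=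
  mul_nonneg (by positivity) (Finset.sum_nonneg fun _ _ => measureReal_nonneg)

lemma cesaroTail_le_one [IsProbabilityMeasure μ] (k : ℕ) (X : ℕ → Ω → ℝ) (x : ℝ) :
    cesaroTail μ k X x ≤ 1 := by
  have hsum : ∑ i ∈ Finset.Icc 1 k, μ.real {ω | |X i ω| > x} ≤ k := by
    simpa using Finset.sum_le_sum fun i (_ : i ∈ Finset.Icc 1 k) => measureReal_le_one (μ := μ)
  calc cesaroTail μ k X x ≤ (1 / (k : ℝ)) * k := by
        unfold cesaroTail; gcongr
    _ ≤ 1 := by rw [one_div_mul_eq_div]; exact div_self_le_one _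

lemma cesaroTail_of_neg [IsProbabilityMeasure μ] {k : ℕ} (hk : 0 < k) (X : ℕ → Ω → ℝ) {x : ℝ}
    (hx : x < 0) : cesaroTail μ k X x = 1 := by
  have huniv : ∀ i, {ω | |X i ω| > x} = univ :=
    fun i => eq_univ_of_forall fun ω => hx.trans_le (abs_nonneg _)
  simp only [cesaroTail, huniv, probReal_univ, Finset.sum_const, Nat.card_Icc,
    Nat.add_sub_cancel, nsmul_eq_mul, mul_one]
  exact one_div_mul_cancel (by exact_mod_cast hk.ne')

variable [IsFiniteMeasure μ]

lemma antitone_cesaroTail (k : ℕ) (X : ℕ → Ω → ℝ) : Antitone (cesaroTail μ k X) :=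
  fun _ _ hxy => mul_le_mul_of_nonneg_left
    (Finset.sum_le_sum fun i _ => antitone_measureReal_lt μ (fun ω => |X i ω|) hxy)
    (by positivity)

lemma continuousWithinAt_Ici_cesaroTail (k : ℕ) (X : ℕ → Ω → ℝ) (x : ℝ) :
    ContinuousWithinAt (cesaroTail μ k X) (Ici x) x :=
  (tendsto_finsetSum _ fun i _ =>
    continuousWithinAt_Ici_measureReal_lt μ (fun ω => |X i ω|) x).const_mul _

end Cesaro

section CesaroCDF

variable {Ω : Type*} [MeasurableSpace Ω] (μ : Measure Ω) [IsProbabilityMeasure μ]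
  (k : ℕ → ℕ) (X : ℕ → ℕ → Ω → ℝ)

lemma bddAbove_range_cesaroTail (x : ℝ) :
    BddAbove (range fun n => cesaroTail μ (k n) (X n) x) :=
  ⟨1, forall_mem_range.2 fun n => cesaroTail_le_one μ (k n) (X n) x⟩

noncomputable def cesaroCDF : StieltjesFunction ℝ where
  toFun x := 1 - ⨆ n, cesaroTail μ (k n) (X n) x
  mono' _ _ hxy := sub_le_sub_left (antitone_ciSup_of_antitone
    (fun n => antitone_cesaroTail μ (k n) (X n)) (bddAbove_range_cesaroTail μ k X) hxy) 1
  right_continuous' x := continuousWithinAt_const.sub (continuousWithinAt_Ici_ciSup_of_antitone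
    (fun n => antitone_cesaroTail μ (k n) (X n))
    (fun n => continuousWithinAt_Ici_cesaroTail μ (k n) (X n) x) (bddAbove_range_cesaroTail μ k X))

lemma tendsto_cesaroCDF_atBot (hk : ∀ n, 0 < k n) :
    Tendsto (cesaroCDF μ k X) atBot (𝓝 0) := by
  refine tendsto_const_nhds.congr' ?_
  filter_upwards [eventually_lt_atBot 0] with x hx
  simp [cesaroCDF, cesaroTail_of_neg μ (hk _) _ hx]

end CesaroCDF

lemma StieltjesFunction.exists_isProbabilityMeasure_iff (f : StieltjesFunction ℝ)
    (hbot : Tendsto f atBot (𝓝 0)) :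
    (∃ ν : Measure ℝ, IsProbabilityMeasure ν ∧ ∀ x, f x = ν.real (Iic x)) ↔
      Tendsto f atTop (𝓝 1) := by
  constructor
  · rintro ⟨ν, hν, hf⟩
    have hcdf : ⇑f = ProbabilityTheory.cdf ν :=
      funext fun x => (hf x).trans (ProbabilityTheory.cdf_eq_real ν x).symm
    exact hcdf ▸ ProbabilityTheory.tendsto_cdf_atTop ν
  · intro htop
    refine ⟨f.measure, f.isProbabilityMeasure hbot htop, fun x => ?_⟩
    rw [measureReal_def, f.measure_Iic hbot x, sub_zero, ENNReal.toReal_ofReal]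
    exact le_of_tendsto hbot (eventually_atBot.2 ⟨x, fun y hy => f.mono hy⟩)

theorem statement6_general
    {Ω : Type*} [MeasurableSpace Ω] (μ : Measure Ω) [IsProbabilityMeasure μ]
    (k : ℕ → ℕ) (hk : ∀ n, 0 < k n)
    (X : ℕ → ℕ → Ω → ℝ)
    (F : ℝ → ℝ)
    (hF : ∀ x : ℝ, F x = 1 - ⨆ n : ℕ, (1 / (k n : ℝ)) * ∑ i ∈ Finset.Icc 1 (k n),
      (μ {ω | |X n i ω| > x}).toReal) :
    ((∃ ν : Measure ℝ, IsProbabilityMeasure ν ∧ ∀ x : ℝ, F x = (ν (Set.Iic x)).toReal)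
        ↔ Tendsto F atTop (nhds 1))
      ∧ ∀ ν : Measure ℝ, IsProbabilityMeasure ν → (∀ x : ℝ, F x = (ν (Set.Iic x)).toReal) →
          ∃ C : ℝ, 0 < C ∧ ∀ x : ℝ,
            (⨆ n : ℕ, (1 / (k n : ℝ)) * ∑ i ∈ Finset.Icc 1 (k n),
                (μ {ω | |X n i ω| > x}).toReal)
              ≤ C * (ν {y : ℝ | |y| > x}).toReal := by
  obtain rfl : F = cesaroCDF μ k X := funext hF
  refine ⟨(cesaroCDF μ k X).exists_isProbabilityMeasure_iff (tendsto_cesaroCDF_atBot μ k X hk),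
    fun ν _ hν => ⟨1, one_pos, fun x => ?_⟩⟩
  have htail : ⨆ n, cesaroTail μ (k n) (X n) x = ν.real (Ioi x) := by
    rw [← compl_Iic, probReal_compl_eq_one_sub measurableSet_Iic, measureReal_def, ← hν x]
    simp [cesaroCDF]
  calc ⨆ n, cesaroTail μ (k n) (X n) x = ν.real (Ioi x) := htail
    _ ≤ 1 * ν.real {y | |y| > x} := by
      rw [one_mul]
      exact measureReal_mono fun y hy => lt_of_lt_of_le hy (le_abs_self y)

/-- With `F(x) = 1 − sup_n (1/k_n) Σ_{i=1}^{k_n} P(|X_{n,i}| > x)`, `F` is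
the distribution function of a random variable `X` iff `lim_{x→∞} F(x) = 1`; and in that case
`{X_{n,i}}` is stochastically dominated in the Cesàro sense by `X`. -/
theorem statement6
    {Ω : Type*} [MeasurableSpace Ω] (μ : Measure Ω) [IsProbabilityMeasure μ]
    (k : ℕ → ℕ) (hk : ∀ n, 0 < k n)
    (X : ℕ → ℕ → Ω → ℝ) (hXmeas : ∀ n i, Measurable (X n i))
    (F : ℝ → ℝ)
    (hF : ∀ x : ℝ, F x = 1 - ⨆ n : ℕ, (1 / (k n : ℝ)) * ∑ i ∈ Finset.Icc 1 (k n),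
      (μ {ω | |X n i ω| > x}).toReal) :
    ((∃ ν : Measure ℝ, IsProbabilityMeasure ν ∧ ∀ x : ℝ, F x = (ν (Set.Iic x)).toReal)
        ↔ Tendsto F atTop (nhds 1))
      ∧ ∀ ν : Measure ℝ, IsProbabilityMeasure ν → (∀ x : ℝ, F x = (ν (Set.Iic x)).toReal) →
          ∃ C : ℝ, 0 < C ∧ ∀ x : ℝ,
            (⨆ n : ℕ, (1 / (k n : ℝ)) * ∑ i ∈ Finset.Icc 1 (k n),
                (μ {ω | |X n i ω| > x}).toReal)
              ≤ C * (ν {y : ℝ | |y| > x}).toReal :=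
  statement6_general μ k hk X F hF
end
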